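/- arXiv:1905.06786 — 4 statements merged into one kernel-verified Lean document; each statement's English description precedes it below -/
import Mathlib

section
/- Let γ : [a,b] → ℂ be continuously differentiable with |γ'(t)| ≤ L on [a,b], and suppose L·(b−a) < |γ(a)| + |γ(b)|. Let ℓ : [a,b] → ℂ be the affine parametrization of the segment from γ(a) to γ(b), i.e. ℓ(t) = γ(a) + ((t−a)/(b−a))·(γ(b)−γ(a)). Then for every t ∈ [a,b] and every λ ∈ [0,1], the convex combination (1−λ)·γ(t) + λ·ℓ(t) is nonzero. In particular, γ and ℓ are homotopic in ℂ \ {0} relative to their (common) endpoints. -/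
/-!
By the mean value inequality, every point of `γ` on `[a, b]` lies in the lens
`closedBall (γ a) (L (t - a)) ∩ closedBall (γ b) (L (b - t))`, and so does the point of the
chord at the same time, since the chord has length at most `L (b - a)`. The lens is convex, so it
contains the straight-line homotopy between the two, and it misses `0` because
`L (t - a) + L (b - t) = L (b - a) < ‖γ a‖ + ‖γ b‖`.
-/

open Set Metric

section Lens

variable {E : Type*} [NormedAddCommGroup E]

lemma ne_zero_of_mem_closedBall_inter {p q z : E} {r s : ℝ} (h : r + s < ‖p‖ + ‖q‖)
    (hz : z ∈ closedBall p r ∩ closedBall q s) : z ≠ 0 := by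
  rintro rfl
  obtain ⟨hp, hq⟩ := hz
  rw [mem_closedBall, dist_comm, dist_zero_right] at hp hq
  linarith

variable [NormedSpace ℝ E]

lemma mem_closedBall_inter_of_norm_deriv_le {a b L : ℝ} {γ γ' : ℝ → E}
    (hderiv : ∀ t ∈ Icc a b, HasDerivWithinAt γ (γ' t) (Icc a b) t)
    (hbound : ∀ t ∈ Icc a b, ‖γ' t‖ ≤ L) {t : ℝ} (ht : t ∈ Icc a b) :
    γ t ∈ closedBall (γ a) (L * (t - a)) ∩ closedBall (γ b) (L * (b - t)) := by
  have hab : a ≤ b := ht.1.trans ht.2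
  have hmvt {s u : ℝ} (hs : s ∈ Icc a b) (hu : u ∈ Icc a b) : dist (γ u) (γ s) ≤ L * ‖u - s‖ :=
    dist_eq_norm (γ u) (γ s) ▸
      (convex_Icc a b).norm_image_sub_le_of_norm_hasDerivWithin_le hderiv hbound hs hu
  constructor
  · simpa [Real.norm_eq_abs, abs_of_nonneg (sub_nonneg.2 ht.1)] using
      hmvt (left_mem_Icc.2 hab) ht
  · simpa [Real.norm_eq_abs, abs_of_nonpos (sub_nonpos.2 ht.2)] using
      hmvt (right_mem_Icc.2 hab) ht

lemma lineMap_mem_closedBall_inter {a b L t : ℝ} {p q : E} (hab : a < b)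
    (hpq : dist p q ≤ L * (b - a)) (ht : t ∈ Icc a b) :
    AffineMap.lineMap p q ((t - a) / (b - a)) ∈
      closedBall p (L * (t - a)) ∩ closedBall q (L * (b - t)) := by
  have hba : 0 < b - a := sub_pos.2 hab
  have hone : 1 - (t - a) / (b - a) = (b - t) / (b - a) := by field_simp; ring
  constructor
  · rw [mem_closedBall, dist_lineMap_left, Real.norm_eq_abs,
      abs_of_nonneg (div_nonneg (sub_nonneg.2 ht.1) hba.le)]
    calc (t - a) / (b - a) * dist p q ≤ (t - a) / (b - a) * (L * (b - a)) := by
          gcongr; exact div_nonneg (sub_nonneg.2 ht.1) hba.le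
      _ = L * (t - a) := by field_simp
  · rw [mem_closedBall, dist_lineMap_right, hone, Real.norm_eq_abs,
      abs_of_nonneg (div_nonneg (sub_nonneg.2 ht.2) hba.le)]
    calc (b - t) / (b - a) * dist p q ≤ (b - t) / (b - a) * (L * (b - a)) := by
          gcongr; exact div_nonneg (sub_nonneg.2 ht.2) hba.le
      _ = L * (b - t) := by field_simp

end Lens

lemma exists_homotopy_of_convex_combination_ne_zero {a b : ℝ} {γ ℓ : ℝ → ℂ}
    (hγ : ContinuousOn γ (Icc a b)) (hℓ : Continuous ℓ) (ha : ℓ a = γ a) (hb : ℓ b = γ b)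
    (hne : ∀ t ∈ Icc a b, ∀ l ∈ Icc (0:ℝ) 1, ((1 - l : ℝ) : ℂ) * γ t + (l : ℂ) * ℓ t ≠ 0) :
    ∃ H : ℝ × ℝ → ℂ, ContinuousOn H (Icc (0:ℝ) 1 ×ˢ Icc a b) ∧
      (∀ t ∈ Icc a b, H (0, t) = γ t) ∧
      (∀ t ∈ Icc a b, H (1, t) = ℓ t) ∧
      (∀ l ∈ Icc (0:ℝ) 1, H (l, a) = γ a ∧ H (l, b) = γ b) ∧
      (∀ p ∈ Icc (0:ℝ) 1 ×ˢ Icc a b, H p ≠ 0) := by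
  refine ⟨fun p ↦ ((1 - p.1 : ℝ) : ℂ) * γ p.2 + (p.1 : ℂ) * ℓ p.2, ?_, by simp, by simp,
    fun l _ ↦ ⟨by simp [ha]; ring, by simp [hb]; ring⟩, fun p hp ↦ hne p.2 hp.2 p.1 hp.1⟩
  refine ContinuousOn.add ?_ (by fun_prop)
  exact (Complex.continuous_ofReal.comp (continuous_const.sub continuous_fst)).continuousOn.mul
    (hγ.comp continuous_snd.continuousOn fun _ hp ↦ hp.2)

theorem stmt_1_general (a b L : ℝ) (γ γ' ℓ : ℝ → ℂ)
    (hab : a < b)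
    (hderiv : ∀ t ∈ Icc a b, HasDerivWithinAt γ (γ' t) (Icc a b) t)
    (hbound : ∀ t ∈ Icc a b, ‖γ' t‖ ≤ L)
    (hcond : L * (b - a) < ‖γ a‖ + ‖γ b‖)
    (hℓ : ∀ t : ℝ, ℓ t = γ a + (((t - a) / (b - a) : ℝ) : ℂ) * (γ b - γ a)) :
    (∀ t ∈ Icc a b, ∀ l ∈ Icc (0:ℝ) 1,
        ((1 - l : ℝ) : ℂ) * γ t + (l : ℂ) * ℓ t ≠ 0) ∧
    ∃ H : ℝ × ℝ → ℂ, ContinuousOn H (Icc (0:ℝ) 1 ×ˢ Icc a b) ∧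
      (∀ t ∈ Icc a b, H (0, t) = γ t) ∧
      (∀ t ∈ Icc a b, H (1, t) = ℓ t) ∧
      (∀ l ∈ Icc (0:ℝ) 1, H (l, a) = γ a ∧ H (l, b) = γ b) ∧
      (∀ p ∈ Icc (0:ℝ) 1 ×ˢ Icc a b, H p ≠ 0) := by
  have hlens {t} (ht : t ∈ Icc a b) :=
    mem_closedBall_inter_of_norm_deriv_le hderiv hbound ht
  have hℓ_lineMap (t : ℝ) : ℓ t = AffineMap.lineMap (γ a) (γ b) ((t - a) / (b - a)) := by
    rw [hℓ, AffineMap.lineMap_apply_module', Complex.real_smul, add_comm]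
  have hne : ∀ t ∈ Icc a b, ∀ l ∈ Icc (0:ℝ) 1,
      ((1 - l : ℝ) : ℂ) * γ t + (l : ℂ) * ℓ t ≠ 0 := by
    intro t ht l hl
    have hchord : dist (γ a) (γ b) ≤ L * (b - a) :=
      dist_comm (γ a) (γ b) ▸ (hlens (right_mem_Icc.2 hab.le)).1
    have hℓt := hℓ_lineMap t ▸ lineMap_mem_closedBall_inter hab hchord ht
    have hz := ((convex_closedBall _ _).inter (convex_closedBall _ _)) (hlens ht) hℓt
      (sub_nonneg.2 hl.2) hl.1 (sub_add_cancel 1 l)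
    simp only [Complex.real_smul] at hz
    exact ne_zero_of_mem_closedBall_inter (by linarith) hz
  refine ⟨hne, exists_homotopy_of_convex_combination_ne_zero
    (fun t ht ↦ (hderiv t ht).continuousWithinAt) ?_ ?_ ?_ hne⟩
  · rw [funext hℓ]; fun_prop
  · simp [hℓ]
  · simp [hℓ, div_self (sub_pos.2 hab).ne']

theorem stmt_1 (a b L : ℝ) (γ γ' ℓ : ℝ → ℂ)
    (hab : a < b) (hL : 0 ≤ L)
    (hderiv : ∀ t ∈ Icc a b, HasDerivWithinAt γ (γ' t) (Icc a b) t)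
    (hcont : ContinuousOn γ' (Icc a b))
    (hbound : ∀ t ∈ Icc a b, ‖γ' t‖ ≤ L)
    (hcond : L * (b - a) < ‖γ a‖ + ‖γ b‖)
    (hℓ : ∀ t : ℝ, ℓ t = γ a + (((t - a) / (b - a) : ℝ) : ℂ) * (γ b - γ a)) :
    (∀ t ∈ Icc a b, ∀ l ∈ Icc (0:ℝ) 1,
        ((1 - l : ℝ) : ℂ) * γ t + (l : ℂ) * ℓ t ≠ 0) ∧
    ∃ H : ℝ × ℝ → ℂ, ContinuousOn H (Icc (0:ℝ) 1 ×ˢ Icc a b) ∧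
      (∀ t ∈ Icc a b, H (0, t) = γ t) ∧
      (∀ t ∈ Icc a b, H (1, t) = ℓ t) ∧
      (∀ l ∈ Icc (0:ℝ) 1, H (l, a) = γ a ∧ H (l, b) = γ b) ∧
      (∀ p ∈ Icc (0:ℝ) 1 ×ˢ Icc a b, H p ≠ 0) :=
  stmt_1_general a b L γ γ' ℓ hab hderiv hbound hcond hℓ
end

section
/- Let ϑ > 0 and let f : [ω₀, ω_N] → ℝ be continuous. Suppose 0 = ω₀ < ω₁ < ⋯ < ω_N is a partition such that f is L_i-Lipschitz on each interval [ω_i, ω_{i+1}]. Set γ* = max{ f(ω_i) : i = 0,…,N }. If for every i one has L_i·(ω_{i+1} − ω_i) < 2γ* + 2ϑ − f(ω_i) − f(ω_{i+1}), then sup{ f(ω) : ω ∈ [ω₀, ω_N] } ≤ γ* + ϑ, and hence γ* ≤ sup f ≤ γ* + ϑ. -/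
open Set

lemma cover_aux (N : ℕ) (hN : 0 < N) (ω : ℕ → ℝ)
    (hmono : ∀ i < N, ω i < ω (i + 1)) (x : ℝ)
    (hx0 : ω 0 ≤ x) (hxN : x ≤ ω N) :
    ∃ i < N, ω i ≤ x ∧ x ≤ ω (i + 1) := by
  induction N with
  | zero => omega
  | succ n ih =>
    rcases Nat.eq_zero_or_pos n with hn | hn
    · subst hn; exact ⟨0, by omega, hx0, hxN⟩
    · by_cases hxn : x ≤ ω n
      · obtain ⟨i, hi, h1, h2⟩ := ih hn (fun i h => hmono i (by omega)) hxn
        exact ⟨i, by omega, h1, h2⟩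
      · exact ⟨n, by omega, le_of_not_ge hxn, hxN⟩

theorem stmt_3 (ϑ : ℝ) (hϑ : 0 < ϑ) (N : ℕ) (hN : 0 < N)
    (ω : ℕ → ℝ) (L : ℕ → ℝ) (hL : ∀ i, 0 ≤ L i)
    (hω0 : ω 0 = 0) (hmono : ∀ i < N, ω i < ω (i + 1))
    (f : ℝ → ℝ) (hf : ContinuousOn f (Icc (ω 0) (ω N)))
    (hLip : ∀ i < N, ∀ x ∈ Icc (ω i) (ω (i + 1)), ∀ y ∈ Icc (ω i) (ω (i + 1)),
      |f x - f y| ≤ L i * |x - y|)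
    (γstar : ℝ)
    (hγ1 : ∀ i ≤ N, f (ω i) ≤ γstar)
    (hγ2 : ∃ i ≤ N, f (ω i) = γstar)
    (hstep : ∀ i < N,
      L i * (ω (i + 1) - ω i) < 2 * γstar + 2 * ϑ - f (ω i) - f (ω (i + 1))) :
    (∀ x ∈ Icc (ω 0) (ω N), f x ≤ γstar + ϑ) ∧
    γstar ≤ sSup (f '' Icc (ω 0) (ω N)) ∧
    sSup (f '' Icc (ω 0) (ω N)) ≤ γstar + ϑ := by
  have hmono' : ∀ j k, j ≤ k → k ≤ N → ω j ≤ ω k := by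
    intro j k hjk hkN
    induction k with
    | zero => interval_cases j; rfl
    | succ m ih =>
      rcases Nat.eq_or_lt_of_le hjk with h | h
      · rw [h]
      · exact (ih (Nat.lt_succ_iff.mp h) (le_trans (Nat.le_succ m) hkN)).trans
          (hmono m (Nat.lt_of_succ_le hkN)).le
  have key : ∀ x ∈ Icc (ω 0) (ω N), f x ≤ γstar + ϑ := by
    intro x hx
    obtain ⟨i, hi, h1, h2⟩ := cover_aux N hN ω hmono x hx.1 hx.2
    have hxI : x ∈ Icc (ω i) (ω (i + 1)) := ⟨h1, h2⟩
    have hA := hLip i hi x hxI (ω i) ⟨le_refl _, (hmono i hi).le⟩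
    have hB := hLip i hi x hxI (ω (i + 1)) ⟨(hmono i hi).le, le_refl _⟩
    have hA' : f x - f (ω i) ≤ L i * (x - ω i) := by
      have := le_abs_self (f x - f (ω i))
      rw [abs_of_nonneg (by linarith : (0:ℝ) ≤ x - ω i)] at hA
      linarith
    have hB' : f x - f (ω (i + 1)) ≤ L i * (ω (i + 1) - x) := by
      have := le_abs_self (f x - f (ω (i + 1)))
      rw [abs_of_nonpos (by linarith : x - ω (i + 1) ≤ 0)] at hB
      linarith
    have hs := hstep i hi
    nlinarith [hA', hB', hs]
  have hsub : f '' Icc (ω 0) (ω N) ⊆ Iic (γstar + ϑ) := by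
    rintro _ ⟨x, hx, rfl⟩; exact key x hx
  have hbdd : BddAbove (f '' Icc (ω 0) (ω N)) := ⟨γstar + ϑ, fun y hy => hsub hy⟩
  obtain ⟨i, hiN, hif⟩ := hγ2
  have hmem : ω i ∈ Icc (ω 0) (ω N) := ⟨hmono' 0 i (Nat.zero_le _) hiN, hmono' i N hiN (le_refl _)⟩
  refine ⟨key, ?_, ?_⟩
  · have : γstar ∈ f '' Icc (ω 0) (ω N) := ⟨ω i, hmem, hif⟩
    exact le_csSup hbdd this
  · exact csSup_le ⟨γstar, ω i, hmem, hif⟩ (fun y hy => hsub hy)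
end

section
/- Let γ : [a,b] → ℂ be continuously differentiable with |γ'(t)| ≤ L for all t, and suppose L·(b−a) < |γ(a)| + |γ(b)|. Let Γ : [0,1] → ℂ be the closed curve obtained by concatenating γ (suitably reparametrized) with the straight segment from γ(b) back to γ(a). Then Γ avoids the origin and its winding number about 0 is zero. -/
/-!
Both pieces of `Γ` lie in the ellipse `K` with foci `γ a`, `γ b` and major axis `L (b - a)`:
`γ` because it is `L`-Lipschitz, so `|γ t - γ a| + |γ t - γ b| ≤ L (t - a) + L (b - t)`,
and the chord by convexity of `K`. The hypothesis `L (b - a) < |γ a| + |γ b|` says exactly that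
`0 ∉ K`. Being closed and convex, `K` is separated from `0` by a line, i.e. lies in an open
half-plane `{z | 0 < re (z v)}`; on that half-plane `z ↦ log (z v) - log v` is a continuous
branch of the logarithm, and composing it with the closed curve `Γ` gives a lift `θ` with
`θ 0 = θ 1`.
-/

open Set

def ellipse {X : Type*} [PseudoMetricSpace X] (p q : X) (r : ℝ) : Set X :=
  {z | dist z p + dist z q ≤ r}

section Ellipse

variable {X : Type*}

theorem isClosed_ellipse [PseudoMetricSpace X] (p q : X) (r : ℝ) : IsClosed (ellipse p q r) :=
  isClosed_le (by fun_prop) continuous_const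

theorem convex_ellipse [NormedAddCommGroup X] [NormedSpace ℝ X] (p q : X) (r : ℝ) :
    Convex ℝ (ellipse p q r) := by
  simpa [ellipse] using ((convexOn_univ_dist p).add (convexOn_univ_dist q)).convex_le r

theorem segment_subset_ellipse [NormedAddCommGroup X] [NormedSpace ℝ X] {p q : X} {r : ℝ}
    (h : dist p q ≤ r) : segment ℝ p q ⊆ ellipse p q r :=
  (convex_ellipse p q r).segment_subset (by simpa [ellipse] using h)
    (by simpa [ellipse, dist_comm] using h)

theorem dist_le_of_mem_ellipse [PseudoMetricSpace X] {p q z : X} {r : ℝ}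
    (hz : z ∈ ellipse p q r) : dist p q ≤ r :=
  (dist_triangle_left p q z).trans hz

theorem zero_notMem_ellipse [SeminormedAddCommGroup X] {p q : X} {r : ℝ}
    (h : r < ‖p‖ + ‖q‖) : 0 ∉ ellipse p q r := by
  simpa [ellipse, dist_zero_left] using h

theorem mem_ellipse_of_dist_le [PseudoMetricSpace X] {f : ℝ → X} {a b L t : ℝ}
    (hf : ∀ x ∈ Icc a b, ∀ y ∈ Icc a b, dist (f x) (f y) ≤ L * dist x y) (ht : t ∈ Icc a b) :
    f t ∈ ellipse (f a) (f b) (L * (b - a)) := by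
  have hta := hf t ht a (left_mem_Icc.2 (ht.1.trans ht.2))
  have htb := hf t ht b (right_mem_Icc.2 (ht.1.trans ht.2))
  rw [Real.dist_eq, abs_of_nonneg (sub_nonneg.2 ht.1)] at hta
  rw [Real.dist_eq, abs_of_nonpos (sub_nonpos.2 ht.2)] at htb
  exact (add_le_add hta htb).trans_eq (by ring)

end Ellipse

namespace Complex

theorem exists_re_mul_pos_of_convex {K : Set ℂ} (hK : Convex ℝ K) (hKc : IsClosed K)
    (h0 : 0 ∉ K) : ∃ v : ℂ, ∀ z ∈ K, 0 < (z * v).re := by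
  obtain ⟨f, u, hfK, hu⟩ := RCLike.geometric_hahn_banach_closed_point (𝕜 := ℂ) hK hKc h0
  refine ⟨-f 1, fun z hz => ?_⟩
  have hfz : f z = z * f 1 := by simpa using f.map_smul z 1
  have := hfK z hz
  simp only [map_zero, RCLike.re_to_complex, hfz] at this hu
  simp only [mul_neg, neg_re]
  linarith

theorem exp_log_mul_sub_log {z v : ℂ} (h : 0 < (z * v).re) : exp (log (z * v) - log v) = z := by
  have hzv : z * v ≠ 0 := fun h' => by simp [h'] at h
  rw [exp_sub, exp_log hzv, exp_log (right_ne_zero_of_mul hzv), mul_div_cancel_right₀ _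
    (right_ne_zero_of_mul hzv)]

theorem exists_continuousOn_exp_eq_of_mapsTo_convex {α : Type*} [TopologicalSpace α]
    {Γ : α → ℂ} {s : Set α} {K : Set ℂ} (hK : Convex ℝ K) (hKc : IsClosed K) (h0 : 0 ∉ K)
    (hΓ : ContinuousOn Γ s) (hΓK : MapsTo Γ s K) :
    ∃ θ : α → ℂ, ContinuousOn θ s ∧ (∀ t ∈ s, exp (θ t) = Γ t) ∧
      ∀ t₁ t₂, Γ t₁ = Γ t₂ → θ t₁ = θ t₂ := by
  obtain ⟨v, hv⟩ := exists_re_mul_pos_of_convex hK hKc h0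
  refine ⟨fun t => log (Γ t * v) - log v, ?_, fun t ht => exp_log_mul_sub_log (hv _ (hΓK ht)),
    fun t₁ t₂ h => by simp only [h]⟩
  exact ((hΓ.mul continuousOn_const).clog fun t ht => Or.inl (hv _ (hΓK ht))).sub
    continuousOn_const

end Complex

theorem ContinuousOn.Icc_union_Icc {α β : Type*} [LinearOrder α] [TopologicalSpace α]
    [OrderClosedTopology α] [TopologicalSpace β] {f : α → β} {a b c : α}
    (h₁ : ContinuousOn f (Icc a b)) (h₂ : ContinuousOn f (Icc b c)) (hab : a ≤ b) (hbc : b ≤ c) :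
    ContinuousOn f (Icc a c) := by
  rw [← Icc_union_Icc_eq_Icc hab hbc]
  exact h₁.union_of_isClosed h₂ isClosed_Icc isClosed_Icc

section Concatenation

variable {a b : ℝ} {γ : ℝ → ℂ} {Γ : ℝ → ℂ}

theorem add_two_mul_mul_sub_mem_Icc (hab : a ≤ b) {t : ℝ} (ht : t ∈ Icc (0:ℝ) (1/2)) :
    a + 2 * t * (b - a) ∈ Icc a b :=
  ⟨by nlinarith [ht.1], by nlinarith [ht.2]⟩

theorem continuousOn_concat (hab : a ≤ b) (hγ : ContinuousOn γ (Icc a b))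
    (hΓ₁ : ∀ t ∈ Icc (0:ℝ) (1/2), Γ t = γ (a + 2 * t * (b - a)))
    (hΓ₂ : ∀ t ∈ Icc (1/2:ℝ) 1, Γ t = γ b + ((2 * t - 1 : ℝ) : ℂ) * (γ a - γ b)) :
    ContinuousOn Γ (Icc 0 1) := by
  refine ContinuousOn.Icc_union_Icc ?_ ?_ (by norm_num) (by norm_num : (1/2 : ℝ) ≤ 1)
  · exact (hγ.comp (by fun_prop) fun t ht => add_two_mul_mul_sub_mem_Icc hab ht).congr hΓ₁
  · exact ContinuousOn.congr (by fun_prop) hΓ₂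

theorem mapsTo_concat_ellipse {L : ℝ} (hab : a ≤ b)
    (hγ : ∀ x ∈ Icc a b, ∀ y ∈ Icc a b, dist (γ x) (γ y) ≤ L * dist x y)
    (hΓ₁ : ∀ t ∈ Icc (0:ℝ) (1/2), Γ t = γ (a + 2 * t * (b - a)))
    (hΓ₂ : ∀ t ∈ Icc (1/2:ℝ) 1, Γ t = γ b + ((2 * t - 1 : ℝ) : ℂ) * (γ a - γ b)) :
    MapsTo Γ (Icc 0 1) (ellipse (γ a) (γ b) (L * (b - a))) := by
  intro t ht
  rcases le_total t (1/2) with h | h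
  · rw [hΓ₁ t ⟨ht.1, h⟩]
    exact mem_ellipse_of_dist_le hγ (add_two_mul_mul_sub_mem_Icc hab ⟨ht.1, h⟩)
  · have hchord := dist_le_of_mem_ellipse (mem_ellipse_of_dist_le hγ (left_mem_Icc.2 hab))
    have hseg : Γ t ∈ segment ℝ (γ b) (γ a) := by
      rw [segment_eq_image']
      exact ⟨2 * t - 1, ⟨by linarith, by linarith [ht.2]⟩,
        by simp [hΓ₂ t ⟨h, ht.2⟩, Complex.real_smul]⟩
    rw [segment_symm] at hseg
    exact segment_subset_ellipse hchord hseg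

end Concatenation

theorem stmt_18_general (a b L : ℝ) (γ γ' : ℝ → ℂ)
    (hab : a < b)
    (hderiv : ∀ t ∈ Icc a b, HasDerivWithinAt γ (γ' t) (Icc a b) t)
    (hbound : ∀ t ∈ Icc a b, ‖γ' t‖ ≤ L)
    (hcond : L * (b - a) < ‖γ a‖ + ‖γ b‖)
    (Γ : ℝ → ℂ)
    (hΓ₁ : ∀ t ∈ Icc (0:ℝ) (1/2), Γ t = γ (a + 2 * t * (b - a)))
    (hΓ₂ : ∀ t ∈ Icc (1/2:ℝ) 1, Γ t = γ b + ((2 * t - 1 : ℝ) : ℂ) * (γ a - γ b)) :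
    (∀ t ∈ Icc (0:ℝ) 1, Γ t ≠ 0) ∧
    ∃ θ : ℝ → ℂ, ContinuousOn θ (Icc (0:ℝ) 1) ∧
      (∀ t ∈ Icc (0:ℝ) 1, Complex.exp (θ t) = Γ t) ∧
      θ 0 = θ 1 := by
  have hlip : ∀ x ∈ Icc a b, ∀ y ∈ Icc a b, dist (γ x) (γ y) ≤ L * dist x y := fun x hx y hy => by
    simpa [dist_eq_norm] using
      (convex_Icc a b).norm_image_sub_le_of_norm_hasDerivWithin_le hderiv hbound hy hx
  have hK := mapsTo_concat_ellipse hab.le hlip hΓ₁ hΓ₂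
  have h0 := zero_notMem_ellipse hcond
  have hΓ := continuousOn_concat hab.le (HasDerivWithinAt.continuousOn hderiv) hΓ₁ hΓ₂
  obtain ⟨θ, hθ, hexp, hθΓ⟩ := Complex.exists_continuousOn_exp_eq_of_mapsTo_convex
    (convex_ellipse _ _ _) (isClosed_ellipse _ _ _) h0 hΓ hK
  have hclosed : Γ 0 = Γ 1 := by
    rw [hΓ₁ 0 (by norm_num), hΓ₂ 1 (by norm_num)]
    norm_num
  exact ⟨fun t ht h => h0 (h ▸ hK ht), θ, hθ, hexp, hθΓ 0 1 hclosed⟩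

theorem stmt_18 (a b L : ℝ) (γ γ' : ℝ → ℂ)
    (hab : a < b) (hL : 0 ≤ L)
    (hderiv : ∀ t ∈ Icc a b, HasDerivWithinAt γ (γ' t) (Icc a b) t)
    (hcont : ContinuousOn γ' (Icc a b))
    (hbound : ∀ t ∈ Icc a b, ‖γ' t‖ ≤ L)
    (hcond : L * (b - a) < ‖γ a‖ + ‖γ b‖)
    (Γ : ℝ → ℂ)
    (hΓ₁ : ∀ t ∈ Icc (0:ℝ) (1/2), Γ t = γ (a + 2 * t * (b - a)))
    (hΓ₂ : ∀ t ∈ Icc (1/2:ℝ) 1, Γ t = γ b + ((2 * t - 1 : ℝ) : ℂ) * (γ a - γ b)) :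
    (∀ t ∈ Icc (0:ℝ) 1, Γ t ≠ 0) ∧
    ∃ θ : ℝ → ℂ, ContinuousOn θ (Icc (0:ℝ) 1) ∧
      (∀ t ∈ Icc (0:ℝ) 1, Complex.exp (θ t) = Γ t) ∧
      θ 0 = θ 1 :=
  stmt_18_general a b L γ γ' hab hderiv hbound hcond Γ hΓ₁ hΓ₂
end

section
/- Let f : [0,∞) → ℝ be continuous and integrable, let ϑ > 0, and let ω̄ > 0 satisfy ∫_{ω̄}^{∞} |f(ω)| dω ≤ ϑ/2. Let 0 = ω₀ < ⋯ < ω_N = ω̄ be a partition with f L_i-Lipschitz on each [ω_i, ω_{i+1}] and (ω̄/4)·(ω_{i+1} − ω_i)·L_i ≤ ϑ/2 for every i. Let P : [0,∞) → ℝ be the piecewise linear interpolant of f at the nodes ω_i on [0, ω̄], extended by P(ω) = 0 for ω > ω̄. Then |∫_0^{∞} f(ω) dω − ∫_0^{∞} P(ω) dω| ≤ ϑ. -/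
/-!
Split `∫₀^∞ = ∫₀^ω̄ + ∫_ω̄^∞`. The tail contributes at most `ϑ/2` and `P` vanishes there.
On each node interval `∫ P` is the trapezoid value `(b - a)(f a + f b)/2`, and for an
`L`-Lipschitz `f`, comparing with `f a` on the left half and with `f b` on the right half
bounds the trapezoid error by `L (b - a)² / 4`. The step condition turns this into
`ϑ/(2ω̄) · (b - a)`, which sums to `ϑ/2`.
-/

open Set MeasureTheory

lemma continuousOn_of_abs_sub_le_mul {f : ℝ → ℝ} {s : Set ℝ} {L : ℝ}
    (hf : ∀ x ∈ s, ∀ y ∈ s, |f x - f y| ≤ L * |x - y|) : ContinuousOn f s := by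
  refine (LipschitzOnWith.of_dist_le_mul (K := L.toNNReal) fun x hx y hy => ?_).continuousOn
  rw [Real.dist_eq, Real.dist_eq]
  exact (hf x hx y hy).trans (mul_le_mul_of_nonneg_right (Real.le_coe_toNNReal L) (abs_nonneg _))

section Trapezoid

variable {f : ℝ → ℝ} {a b L : ℝ}

lemma abs_intervalIntegral_sub_mul_left_le (hab : a ≤ b) (hf : IntervalIntegrable f volume a b)
    (hL : ∀ t ∈ Icc a b, |f t - f a| ≤ L * (t - a)) :
    |(∫ t in a..b, f t) - (b - a) * f a| ≤ L * (b - a) ^ 2 / 2 := by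
  calc |(∫ t in a..b, f t) - (b - a) * f a| = |∫ t in a..b, (f t - f a)| := by
        rw [intervalIntegral.integral_sub hf intervalIntegrable_const,
          intervalIntegral.integral_const, smul_eq_mul]
    _ ≤ ∫ t in a..b, |f t - f a| := intervalIntegral.abs_integral_le_integral_abs hab
    _ ≤ ∫ t in a..b, L * (t - a) :=
        intervalIntegral.integral_mono_on hab (hf.sub intervalIntegrable_const).abs
          ((by fun_prop : Continuous _).intervalIntegrable _ _) hL
    _ = L * (b - a) ^ 2 / 2 := by
        rw [intervalIntegral.integral_const_mul, intervalIntegral.integral_comp_sub_right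
          (fun x => x), integral_id]
        ring

lemma abs_intervalIntegral_sub_mul_right_le (hab : a ≤ b) (hf : IntervalIntegrable f volume a b)
    (hL : ∀ t ∈ Icc a b, |f t - f b| ≤ L * (b - t)) :
    |(∫ t in a..b, f t) - (b - a) * f b| ≤ L * (b - a) ^ 2 / 2 := by
  calc |(∫ t in a..b, f t) - (b - a) * f b| = |∫ t in a..b, (f t - f b)| := by
        rw [intervalIntegral.integral_sub hf intervalIntegrable_const,
          intervalIntegral.integral_const, smul_eq_mul]
    _ ≤ ∫ t in a..b, |f t - f b| := intervalIntegral.abs_integral_le_integral_abs hab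
    _ ≤ ∫ t in a..b, L * (b - t) :=
        intervalIntegral.integral_mono_on hab (hf.sub intervalIntegrable_const).abs
          ((by fun_prop : Continuous _).intervalIntegrable _ _) hL
    _ = L * (b - a) ^ 2 / 2 := by
        rw [intervalIntegral.integral_const_mul, intervalIntegral.integral_comp_sub_left
          (fun x => x), integral_id]
        ring

lemma abs_intervalIntegral_sub_trapezoid_le (hab : a ≤ b)
    (hf : ∀ x ∈ Icc a b, ∀ y ∈ Icc a b, |f x - f y| ≤ L * |x - y|) :
    |(∫ t in a..b, f t) - (b - a) * (f a + f b) / 2| ≤ L * (b - a) ^ 2 / 4 := by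
  set m := (a + b) / 2 with hm
  have ham : a ≤ m := by linarith
  have hmb : m ≤ b := by linarith
  have hcont := continuousOn_of_abs_sub_le_mul hf
  have hfam := (hcont.mono (Icc_subset_Icc_right hmb)).intervalIntegrable_of_Icc (μ := volume) ham
  have hfmb := (hcont.mono (Icc_subset_Icc_left ham)).intervalIntegrable_of_Icc (μ := volume) hmb
  have left := abs_intervalIntegral_sub_mul_left_le ham hfam fun t ht => by
      simpa [abs_of_nonneg (sub_nonneg.2 ht.1)] using
        hf t ⟨ht.1, ht.2.trans hmb⟩ a (left_mem_Icc.2 hab)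
  have right := abs_intervalIntegral_sub_mul_right_le hmb hfmb fun t ht => by
      simpa [abs_sub_comm t b, abs_of_nonneg (sub_nonneg.2 ht.2)] using
        hf t ⟨ham.trans ht.1, ht.2⟩ b (right_mem_Icc.2 hab)
  rw [← intervalIntegral.integral_add_adjacent_intervals hfam hfmb]
  calc _ = |((∫ t in a..m, f t) - (m - a) * f a) + ((∫ t in m..b, f t) - (b - m) * f b)| := by
        congr 1; ring
    _ ≤ L * (m - a) ^ 2 / 2 + L * (b - m) ^ 2 / 2 :=
        (abs_add_le _ _).trans (add_le_add left right)
    _ = L * (b - a) ^ 2 / 4 := by ring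

end Trapezoid

section Interpolant

variable {P : ℝ → ℝ} {a b y₀ y₁ : ℝ}

lemma intervalIntegrable_of_eqOn_affine (hab : a ≤ b)
    (hP : ∀ t ∈ Icc a b, P t = y₀ + (t - a) / (b - a) * (y₁ - y₀)) :
    IntervalIntegrable P volume a b :=
  ((by fun_prop : Continuous fun t => y₀ + (t - a) / (b - a) * (y₁ - y₀)).continuousOn.congr
    hP).intervalIntegrable_of_Icc hab

lemma intervalIntegral_eq_of_eqOn_affine (hab : a < b)
    (hP : ∀ t ∈ Icc a b, P t = y₀ + (t - a) / (b - a) * (y₁ - y₀)) :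
    ∫ t in a..b, P t = (b - a) * (y₀ + y₁) / 2 := by
  have : b - a ≠ 0 := sub_ne_zero.2 hab.ne'
  rw [intervalIntegral.integral_congr (g := fun t => y₀ + (t - a) * ((y₁ - y₀) / (b - a)))
    fun t ht => by rw [hP t (uIcc_of_le hab.le ▸ ht)]; ring]
  rw [intervalIntegral.integral_add intervalIntegrable_const
      ((by fun_prop : Continuous _).intervalIntegrable _ _),
    intervalIntegral.integral_const, intervalIntegral.integral_mul_const,
    intervalIntegral.integral_comp_sub_right (fun x => x), integral_id, smul_eq_mul]
  field_simp
  ring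

end Interpolant

lemma abs_intervalIntegral_sub_affine_interpolant_le {f P : ℝ → ℝ} {a b L : ℝ} (hab : a < b)
    (hf : ∀ x ∈ Icc a b, ∀ y ∈ Icc a b, |f x - f y| ≤ L * |x - y|)
    (hP : ∀ t ∈ Icc a b, P t = f a + (t - a) / (b - a) * (f b - f a)) :
    |(∫ t in a..b, f t) - ∫ t in a..b, P t| ≤ L * (b - a) ^ 2 / 4 := by
  rw [intervalIntegral_eq_of_eqOn_affine hab hP]
  exact abs_intervalIntegral_sub_trapezoid_le hab.le hf

lemma abs_intervalIntegral_sub_le_of_partition {f g : ℝ → ℝ} {x : ℕ → ℝ} {N : ℕ} {c : ℝ}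
    (hf : ∀ i < N, IntervalIntegrable f volume (x i) (x (i + 1)))
    (hg : ∀ i < N, IntervalIntegrable g volume (x i) (x (i + 1)))
    (hfg : ∀ i < N, |(∫ t in x i..x (i + 1), f t) - ∫ t in x i..x (i + 1), g t|
      ≤ c * (x (i + 1) - x i)) :
    |(∫ t in x 0..x N, f t) - ∫ t in x 0..x N, g t| ≤ c * (x N - x 0) := by
  rw [← intervalIntegral.sum_integral_adjacent_intervals hf,
    ← intervalIntegral.sum_integral_adjacent_intervals hg, ← Finset.sum_sub_distrib]
  calc _ ≤ ∑ i ∈ Finset.range N,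
        |(∫ t in x i..x (i + 1), f t) - ∫ t in x i..x (i + 1), g t| :=
        Finset.abs_sum_le_sum_abs _ _
    _ ≤ ∑ i ∈ Finset.range N, c * (x (i + 1) - x i) :=
        Finset.sum_le_sum fun i hi => hfg i (Finset.mem_range.1 hi)
    _ = c * (x N - x 0) := by rw [← Finset.mul_sum, Finset.sum_range_sub x]

lemma abs_integral_Ici_sub_le {f g : ℝ → ℝ} {a c : ℝ} (hf : IntegrableOn f (Ici a))
    (hac : a ≤ c) (hg : IntervalIntegrable g volume a c) (hg0 : ∀ t, c < t → g t = 0) :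
    |(∫ t in Ici a, f t) - ∫ t in Ici a, g t|
      ≤ |(∫ t in a..c, f t) - ∫ t in a..c, g t| + ∫ t in Ici c, |f t| := by
  have hfIoi : IntegrableOn f (Ioi c) := hf.mono_set (Ioi_subset_Ici hac)
  have hgIoi : ∫ t in Ioi c, g t = 0 := setIntegral_eq_zero_of_forall_eq_zero hg0
  have hfac : IntervalIntegrable f volume a c :=
    (intervalIntegrable_iff_integrableOn_Icc_of_le hac).2 (hf.mono_set Icc_subset_Ici_self)
  have hgint : IntegrableOn g (Ioi c) :=
    integrableOn_zero.congr_fun (fun t ht => (hg0 t ht).symm) measurableSet_Ioi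
  simp only [integral_Ici_eq_integral_Ioi]
  rw [← intervalIntegral.integral_interval_add_Ioi' hfac hfIoi,
    ← intervalIntegral.integral_interval_add_Ioi' hg hgint, hgIoi]
  calc _ = |((∫ t in a..c, f t) - ∫ t in a..c, g t) + ∫ t in Ioi c, f t| := by congr 1; ring
    _ ≤ _ := (abs_add_le _ _).trans (add_le_add_right abs_integral_le_integral_abs _)

theorem stmt_19_general (ϑ ωbar : ℝ) (hωbar : 0 < ωbar)
    (f : ℝ → ℝ)
    (hint : IntegrableOn f (Ici 0))
    (htail : (∫ t in Ici ωbar, |f t|) ≤ ϑ / 2)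
    (N : ℕ) (ω : ℕ → ℝ) (L : ℕ → ℝ)
    (hω0 : ω 0 = 0) (hωN : ω N = ωbar)
    (hmono : ∀ i < N, ω i < ω (i + 1))
    (hLip : ∀ i < N, ∀ x ∈ Icc (ω i) (ω (i + 1)), ∀ y ∈ Icc (ω i) (ω (i + 1)),
      |f x - f y| ≤ L i * |x - y|)
    (hstep : ∀ i < N, ωbar / 4 * (ω (i + 1) - ω i) * L i ≤ ϑ / 2)
    (P : ℝ → ℝ)
    (hP : ∀ i < N, ∀ t ∈ Icc (ω i) (ω (i + 1)),
      P t = f (ω i) + (t - ω i) / (ω (i + 1) - ω i) * (f (ω (i + 1)) - f (ω i)))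
    (hP0 : ∀ t : ℝ, ωbar < t → P t = 0) :
    |(∫ t in Ici (0:ℝ), f t) - ∫ t in Ici (0:ℝ), P t| ≤ ϑ := by
  have hfi : ∀ i < N, IntervalIntegrable f volume (ω i) (ω (i + 1)) := fun i hi =>
    (continuousOn_of_abs_sub_le_mul (hLip i hi)).intervalIntegrable_of_Icc (hmono i hi).le
  have hPi : ∀ i < N, IntervalIntegrable P volume (ω i) (ω (i + 1)) := fun i hi =>
    intervalIntegrable_of_eqOn_affine (hmono i hi).le (hP i hi)
  have hpiece : ∀ i < N, |(∫ t in ω i..ω (i + 1), f t) - ∫ t in ω i..ω (i + 1), P t|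
      ≤ ϑ / (2 * ωbar) * (ω (i + 1) - ω i) := fun i hi => by
    refine (abs_intervalIntegral_sub_affine_interpolant_le (hmono i hi) (hLip i hi)
      (hP i hi)).trans ?_
    have hΔ : 0 < ω (i + 1) - ω i := sub_pos.2 (hmono i hi)
    rw [div_mul_eq_mul_div, le_div_iff₀ (by positivity)]
    nlinarith [hstep i hi]
  have hlow := abs_intervalIntegral_sub_le_of_partition hfi hPi hpiece
  have hPint := IntervalIntegrable.trans_iterate hPi
  rw [hω0, hωN] at hlow hPint
  have htotal := abs_integral_Ici_sub_le hint hωbar.le hPint hP0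
  have : ϑ / (2 * ωbar) * (ωbar - 0) = ϑ / 2 := by rw [sub_zero]; field_simp
  linarith

theorem stmt_19 (ϑ ωbar : ℝ) (hϑ : 0 < ϑ) (hωbar : 0 < ωbar)
    (f : ℝ → ℝ) (hf : ContinuousOn f (Ici 0))
    (hint : IntegrableOn f (Ici 0))
    (htail : (∫ t in Ici ωbar, |f t|) ≤ ϑ / 2)
    (N : ℕ) (hN : 0 < N) (ω : ℕ → ℝ) (L : ℕ → ℝ) (hL : ∀ i, 0 ≤ L i)
    (hω0 : ω 0 = 0) (hωN : ω N = ωbar)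
    (hmono : ∀ i < N, ω i < ω (i + 1))
    (hLip : ∀ i < N, ∀ x ∈ Icc (ω i) (ω (i + 1)), ∀ y ∈ Icc (ω i) (ω (i + 1)),
      |f x - f y| ≤ L i * |x - y|)
    (hstep : ∀ i < N, ωbar / 4 * (ω (i + 1) - ω i) * L i ≤ ϑ / 2)
    (P : ℝ → ℝ)
    (hP : ∀ i < N, ∀ t ∈ Icc (ω i) (ω (i + 1)),
      P t = f (ω i) + (t - ω i) / (ω (i + 1) - ω i) * (f (ω (i + 1)) - f (ω i)))
    (hP0 : ∀ t : ℝ, ωbar < t → P t = 0) :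
    |(∫ t in Ici (0:ℝ), f t) - ∫ t in Ici (0:ℝ), P t| ≤ ϑ :=
  stmt_19_general ϑ ωbar hωbar f hint htail N ω L hω0 hωN hmono hLip hstep P hP hP0
end
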